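/- In the fair rating algorithm, suppose the log-unnormalized fair rating satisfies l_n⁰ = ∑_{m : T_n(m,n)=1, m<n} (log-likelihood contribution of node m), i.e., fair ratings aggregate contributions of exactly the ancestors of n in the DAG. If l_{n-} is computed as the linear combination w_nᵀ l_{1:n-1} with w_n = T_{n-1}^{-1} t_n (where t_n is the first n-1 entries of the n-th column of the transitive closure matrix T_n), and each l_m equals the sum of contributions of ancestors of m plus m's own contribution, then l_{n-} equals the sum of contributions of all ancestors of n, i.e., each ancestor's contribution is counted exactly once. -/
import Mathlib


/-- The transitive closure matrix `T = sgn((I - A)⁻¹)` of a DAG adjacency matrix. -/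
noncomputable def transClosure {n : ℕ} (A : Matrix (Fin n) (Fin n) ℝ) :
    Matrix (Fin n) (Fin n) ℝ :=
  fun i j => if ((1 : Matrix (Fin n) (Fin n) ℝ) - A)⁻¹ i j = 0 then 0 else 1

/-- **Fair rating algorithm (incest removal)**: if every node `m`'s public belief
`l_m` is the sum of the contributions of `m` and all its ancestors in the DAG, then
the linear combination `wᵀ l_{1:n-1}` with weights `w = T_{n-1}⁻¹ t_n` equals the
sum of the contributions of exactly the ancestors of the last node `n`, each counted
exactly once. -/
theorem fair_rating_incest_removal {N : ℕ}
    (A : Matrix (Fin (N+1)) (Fin (N+1)) ℝ)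
    (h01 : ∀ i j, A i j = 0 ∨ A i j = 1)
    (hupper : ∀ i j : Fin (N+1), j ≤ i → A i j = 0)
    {E : Type*} [AddCommGroup E] [Module ℝ E]
    (c : Fin (N+1) → E)
    (T : Matrix (Fin (N+1)) (Fin (N+1)) ℝ) (hT : T = transClosure A)
    (Tsub : Matrix (Fin N) (Fin N) ℝ)
    (hTsub : Tsub = fun i j => T i.castSucc j.castSucc)
    (t : Fin N → ℝ) (ht : t = fun i => T i.castSucc (Fin.last N))
    (w : Fin N → ℝ) (hw : w = Tsub⁻¹.mulVec t)
    (l : Fin (N+1) → E)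
    (hl : l = fun m => ∑ m' ∈ Finset.univ.filter (fun m' => T m' m = 1), c m') :
    ∑ m : Fin N, w m • l m.castSucc =
      ∑ m' ∈ Finset.univ.filter
          (fun m' : Fin N => T m'.castSucc (Fin.last N) = 1),
        c m'.castSucc := by
  set B : Matrix (Fin (N+1)) (Fin (N+1)) ℝ := 1 - A with hB
  -- B is upper triangular with unit diagonal
  have hBtri : B.BlockTriangular id := by
    intro i j hij
    simp only [hB, Matrix.sub_apply, Matrix.one_apply, hupper i j (le_of_lt hij)]
    rw [if_neg (by exact fun h => absurd h.symm (ne_of_lt hij)), sub_zero]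
  have hBdiag : ∀ i, B i i = 1 := by
    intro i
    simp [hB, Matrix.one_apply, hupper i i le_rfl]
  have hBdet : B.det = 1 := by
    rw [Matrix.det_of_upperTriangular hBtri]
    simp [hBdiag]
  have hBunit : IsUnit B.det := by rw [hBdet]; exact isUnit_one
  haveI : Invertible B := B.invertibleOfIsUnitDet hBunit
  have hBinvtri : B⁻¹.BlockTriangular id := Matrix.blockTriangular_inv_of_blockTriangular hBtri
  -- diagonal of B⁻¹ is 1
  have hBinvB : B⁻¹ * B = 1 := Matrix.nonsing_inv_mul B hBunit
  have hBinvdiag : ∀ i, B⁻¹ i i = 1 := by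
    intro i
    have h := congrFun (congrFun hBinvB i) i
    rw [Matrix.mul_apply] at h
    rw [Finset.sum_eq_single i] at h
    · rwa [hBdiag, mul_one, Matrix.one_apply_eq] at h
    · intro k _ hk
      rcases lt_or_gt_of_ne hk with hlt | hgt
      · rw [hBinvtri hlt, zero_mul]
      · rw [hBtri hgt, mul_zero]
    · simp
  -- facts about T
  have hTlow : ∀ i j : Fin (N+1), j < i → T i j = 0 := by
    intro i j hij
    rw [hT]; simp only [transClosure]
    rw [if_pos (hBinvtri hij)]
  have hT01 : ∀ i j, T i j = 0 ∨ T i j = 1 := by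
    intro i j
    rw [hT]; simp only [transClosure]
    split <;> simp
  -- l as a weighted sum
  have hl' : ∀ m : Fin N, l m.castSucc = ∑ m' : Fin N, T m'.castSucc m.castSucc • c m'.castSucc := by
    intro m
    rw [hl]
    simp only
    rw [Finset.sum_filter, Fin.sum_univ_castSucc]
    have hlast : T (Fin.last N) m.castSucc = 0 := hTlow _ _ (Fin.castSucc_lt_last m)
    rw [hlast]
    simp only [zero_ne_one, if_false]
    rw [add_zero]
    refine Finset.sum_congr rfl fun m' _ => ?_
    rcases hT01 m'.castSucc m.castSucc with h | h <;> simp [h]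
  -- Tsub invertible
  have hTsubtri : Tsub.BlockTriangular id := by
    intro i j hij
    rw [hTsub]
    exact hTlow _ _ (by simpa using hij)
  have hTsubdiag : ∀ i, Tsub i i = 1 := by
    intro i
    rw [hTsub]
    simp only
    rw [hT]; simp only [transClosure]
    rw [if_neg (by rw [hBinvdiag]; exact one_ne_zero)]
  have hTsubdet : IsUnit Tsub.det := by
    rw [Matrix.det_of_upperTriangular hTsubtri]
    simp [hTsubdiag]
  have hkey : Tsub.mulVec w = t := by
    rw [hw, Matrix.mulVec_mulVec, Matrix.mul_nonsing_inv Tsub hTsubdet, Matrix.one_mulVec]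
  calc ∑ m : Fin N, w m • l m.castSucc
      = ∑ m' : Fin N, (∑ m : Fin N, Tsub m' m * w m) • c m'.castSucc := by
        simp only [hl', Finset.smul_sum, Finset.sum_smul]
        rw [Finset.sum_comm]
        refine Finset.sum_congr rfl fun m' _ => Finset.sum_congr rfl fun m _ => ?_
        rw [hTsub, smul_smul, mul_comm]
    _ = ∑ m' : Fin N, t m' • c m'.castSucc := by
        refine Finset.sum_congr rfl fun m' _ => ?_
        have := congrFun hkey m'
        rw [Matrix.mulVec, dotProduct] at this
        rw [this]
    _ = ∑ m' ∈ Finset.univ.filter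
          (fun m' : Fin N => T m'.castSucc (Fin.last N) = 1), c m'.castSucc := by
        rw [Finset.sum_filter]
        refine Finset.sum_congr rfl fun m' _ => ?_
        rw [ht]
        rcases hT01 m'.castSucc (Fin.last N) with h | h <;> simp [h]
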